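/- arXiv:1609.01744 — 2 statements merged into one kernel-verified Lean document; each statement's English description precedes it below -/
import Mathlib

section
/- Let A be a commutative ring and let f : A → B be an injective, faithfully flat ring homomorphism. Then the quotient A-module B/A (the cokernel of f viewed as a map of A-modules) is a flat A-module. -/
open TensorProduct LinearMap

/-- For a faithfully flat algebra `B`, the map `m ↦ m ⊗ 1 : M → M ⊗ B` is injective. -/
lemma aux_tmul_one_injective (A B : Type) [CommRing A] [CommRing B] [Algebra A B]
    (hflat : Module.Flat A B)
    (hfaithful : ∀ (M : Type) [AddCommGroup M] [Module A M],
      Subsingleton (TensorProduct A M B) → Subsingleton M)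
    (M : Type) [AddCommGroup M] [Module A M] :
    Function.Injective (fun m : M => (m ⊗ₜ (1 : B) : M ⊗[A] B)) := by
  set g : M →ₗ[A] M ⊗[A] B := (TensorProduct.mk A M B).flip 1 with hg
  have hgapp : ∀ m : M, g m = m ⊗ₜ 1 := fun m => rfl
  suffices h : Function.Injective g by exact h
  rw [← LinearMap.ker_eq_bot]
  set K := LinearMap.ker g with hK
  -- show the map `B ⊗ K → B ⊗ M` is zero
  have hzero : ∀ x : B ⊗[A] K, LinearMap.lTensor B K.subtype x = 0 := by
    intro x
    induction x using TensorProduct.induction_on with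
    | zero => simp
    | tmul b k =>
      have hk : (k : M) ⊗ₜ (1 : B) = (0 : M ⊗[A] B) := k.2
      have h1 : (1 : B) ⊗ₜ (k : M) = (0 : B ⊗[A] M) := by
        have := congrArg (TensorProduct.comm A M B) hk
        simpa using this
      have : LinearMap.lTensor B K.subtype (b ⊗ₜ k) = b ⊗ₜ (k : M) := rfl
      rw [this]
      calc b ⊗ₜ[A] (k : M) = (b • (1 : B)) ⊗ₜ[A] (k : M) := by rw [smul_eq_mul, mul_one]
        _ = b • ((1 : B) ⊗ₜ[A] (k : M)) := TensorProduct.smul_tmul' b 1 (k : M)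
        _ = 0 := by rw [h1, smul_zero]
    | add x y hx hy => rw [map_add, hx, hy, add_zero]
  have hinj' : Function.Injective (LinearMap.lTensor B K.subtype) :=
    Module.Flat.lTensor_preserves_injective_linearMap K.subtype K.injective_subtype
  have hsub : Subsingleton (B ⊗[A] K) := by
    refine subsingleton_iff.2 fun x y => hinj' ?_
    rw [hzero x, hzero y]
  haveI hsub' : Subsingleton (TensorProduct A K B) :=
    (TensorProduct.comm A K B).toEquiv.symm.symm.subsingleton
  haveI : Subsingleton K := hfaithful K hsub'
  exact Submodule.eq_bot_of_subsingleton

/- If `A → B` is an injective, faithfully flat ring homomorphism (made into an algebra),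
then the cokernel `B/A` of the inclusion is a flat `A`-module. -/
theorem stmt2 (A B : Type) [CommRing A] [CommRing B] [Algebra A B]
    (hinj : Function.Injective (algebraMap A B))
    (hflat : Module.Flat A B)
    (hfaithful : ∀ (M : Type) [AddCommGroup M] [Module A M],
      Subsingleton (TensorProduct A M B) → Subsingleton M) :
    Module.Flat A (B ⧸ LinearMap.range (Algebra.linearMap A B)) := by
  set R : Submodule A B := LinearMap.range (Algebra.linearMap A B) with hR
  set Q := B ⧸ R with hQ
  rw [Module.Flat.iff_rTensor_injective']
  intro I
  rw [injective_iff_map_eq_zero]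
  intro x hx
  -- lift x along the surjection I ⊗ B → I ⊗ Q
  obtain ⟨y, hy⟩ := LinearMap.lTensor_surjective (I : Type) (R.mkQ_surjective) x
  -- auxiliary: image of any element of I ⊗ B lands in I • ⊤
  have hlands : ∀ z : (I : Type) ⊗[A] B,
      TensorProduct.lid A B (LinearMap.rTensor B I.subtype z) ∈ I • (⊤ : Submodule A B) := by
    intro z
    induction z using TensorProduct.induction_on with
    | zero => simp
    | tmul i c =>
      have : TensorProduct.lid A B (LinearMap.rTensor B I.subtype (i ⊗ₜ c))
          = (i : A) • c := by simp
      rw [this]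
      exact Submodule.smul_mem_smul i.2 trivial
    | add u v hu hv => rw [map_add, map_add]; exact Submodule.add_mem _ hu hv
  -- auxiliary: mkQ commutes with lid
  have hcompat : ∀ z : A ⊗[A] B, R.mkQ (TensorProduct.lid A B z)
      = TensorProduct.lid A Q (LinearMap.lTensor A R.mkQ z) := by
    intro z
    induction z using TensorProduct.induction_on with
    | zero => simp
    | tmul a c => simp
    | add u v hu hv => simp only [map_add, hu, hv]
  -- consider the image of y in B
  set b : B := TensorProduct.lid A B (LinearMap.rTensor B I.subtype y) with hb
  -- b maps to zero in Q
  have hbQ : R.mkQ b = 0 := by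
    have hnat : LinearMap.lTensor A R.mkQ (LinearMap.rTensor B I.subtype y)
        = LinearMap.rTensor Q I.subtype (LinearMap.lTensor (I : Type) R.mkQ y) := by
      rw [← LinearMap.comp_apply, ← LinearMap.comp_apply,
        LinearMap.lTensor_comp_rTensor, LinearMap.rTensor_comp_lTensor]
    have h0 : LinearMap.lTensor A R.mkQ (LinearMap.rTensor B I.subtype y) = 0 := by
      rw [hnat, hy, hx]
    rw [hb, hcompat, h0, map_zero]
  -- b lies in I • ⊤
  have hbI : b ∈ I • (⊤ : Submodule A B) := hlands y
  -- b is in the image of A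
  obtain ⟨a, ha⟩ : ∃ a : A, algebraMap A B a = b := by
    have := (Submodule.Quotient.mk_eq_zero R).1 hbQ
    obtain ⟨a, ha⟩ := this
    exact ⟨a, ha⟩
  -- a ∈ I, by faithful flatness
  have haI : a ∈ I := by
    have hminj := aux_tmul_one_injective A B hflat hfaithful (A ⧸ I)
    have h1 : (Ideal.Quotient.mk I a : A ⧸ I) ⊗ₜ (1 : B) = (0 : (A ⧸ I) ⊗[A] B) := by
      apply (TensorProduct.quotTensorEquivQuotSMul B I).injective
      rw [TensorProduct.quotTensorEquivQuotSMul_mk_tmul, map_zero]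
      rw [← Algebra.algebraMap_eq_smul_one, ha]
      exact (Submodule.Quotient.mk_eq_zero _).2 hbI
    have h2 : (fun m : A ⧸ I => (m ⊗ₜ (1 : B) : (A ⧸ I) ⊗[A] B)) (Ideal.Quotient.mk I a)
        = (fun m : A ⧸ I => (m ⊗ₜ (1 : B) : (A ⧸ I) ⊗[A] B)) 0 := by
      simpa using h1
    have := hminj h2
    rwa [← Ideal.Quotient.eq_zero_iff_mem]
  -- hence y is the image of a ⊗ 1
  have hy' : y = (⟨a, haI⟩ : I) ⊗ₜ (1 : B) := by
    have hinjB : Function.Injective (LinearMap.rTensor B I.subtype) :=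
      Module.Flat.rTensor_preserves_injective_linearMap I.subtype I.injective_subtype
    apply hinjB
    apply (TensorProduct.lid A B).injective
    have : TensorProduct.lid A B (LinearMap.rTensor B I.subtype ((⟨a, haI⟩ : I) ⊗ₜ (1 : B)))
        = a • (1 : B) := by simp
    rw [this, ← Algebra.algebraMap_eq_smul_one, ha, ← hb]
  -- conclude: x = image of a ⊗ 1 in I ⊗ Q, and mkQ 1 = 0
  have h1Q : R.mkQ (1 : B) = 0 := by
    rw [Submodule.mkQ_apply, Submodule.Quotient.mk_eq_zero]
    exact ⟨1, map_one (algebraMap A B)⟩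
  calc x = LinearMap.lTensor (I : Type) R.mkQ y := hy.symm
    _ = (⟨a, haI⟩ : I) ⊗ₜ (R.mkQ 1) := by rw [hy']; rfl
    _ = 0 := by rw [h1Q, TensorProduct.tmul_zero]
end

section
/- Let X be a topological space, let A ⊆ X be a subspace, and suppose every point of the closure of A in X has a neighborhood basis of open sets V ⊆ X such that V ∩ A is nonempty and connected. Let j : A ↪ cl(A) be the inclusion. Then for the constant sheaf ℤ on A, the unit map ℤ_{cl(A)} → j_*(ℤ_A) is an isomorphism of sheaves on cl(A). -/
/- If every point of `cl(A)` has a neighbourhood basis of open sets `V ⊆ X` with `V ∩ A`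
nonempty and connected, then for the constant sheaf `ℤ` on `A`, the unit map
`ℤ_{cl(A)} → j_*(ℤ_A)` is an isomorphism, where `j : A ↪ cl(A)`.  Expressed on sections:
for every relatively open `W ⊆ cl(A)`, the restriction map from continuous (= locally
constant, as `ℤ` is discrete) functions `W → ℤ` to continuous functions `W ∩ A → ℤ`
is bijective. -/
theorem stmt10 (X : Type) [TopologicalSpace X] (A : Set X)
    (hbasis : ∀ x ∈ closure A, ∀ U ∈ nhds x,
      ∃ V : Set X, IsOpen V ∧ x ∈ V ∧ V ⊆ U ∧ (V ∩ A).Nonempty ∧ IsConnected (V ∩ A)) :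
    ∀ W : Set X, W ⊆ closure A → (∃ O : Set X, IsOpen O ∧ W = O ∩ closure A) →
      Function.Bijective (fun f : C(W, ℤ) =>
        f.comp ⟨Set.inclusion (Set.inter_subset_left : W ∩ A ⊆ W),
          continuous_inclusion Set.inter_subset_left⟩) := by
  rintro W hWcl ⟨O, hO, hWO⟩
  have hmemW : ∀ {a : X}, a ∈ O → a ∈ A → a ∈ W := by
    intro a haO haA
    rw [hWO]; exact ⟨haO, subset_closure haA⟩
  have hOofW : ∀ {a : X}, a ∈ W → a ∈ O := by
    intro a ha; rw [hWO] at ha; exact ha.1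
  constructor
  · -- injectivity: W ∩ A is dense in W
    intro f g hfg
    have hdense : Dense {x : W | (x : X) ∈ A} := by
      intro x
      rw [mem_closure_iff]
      rintro U hU hxU
      rcases isOpen_induced_iff.mp hU with ⟨U', hU', rfl⟩
      have hx_cl : (x : X) ∈ closure A := hWcl x.2
      have hx_O : (x : X) ∈ O := hOofW x.2
      have hnhds : U' ∩ O ∈ nhds (x : X) := (hU'.inter hO).mem_nhds ⟨hxU, hx_O⟩
      rcases mem_closure_iff_nhds.mp hx_cl _ hnhds with ⟨a, ⟨haU, haO⟩, haA⟩
      exact ⟨⟨a, hmemW haO haA⟩, haU, haA⟩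
    apply ContinuousMap.ext
    have heq := Continuous.ext_on hdense f.continuous g.continuous ?_
    · intro x; rw [heq]
    · rintro ⟨x, hxW⟩ hxA
      exact DFunLike.congr_fun hfg ⟨x, hxW, hxA⟩
  · -- surjectivity
    intro g
    -- key: for each w ∈ W, an open V ∋ w, V ⊆ O, with g constant on V ∩ A, V ∩ A nonempty
    have key : ∀ w ∈ W, ∃ V : Set X, IsOpen V ∧ w ∈ V ∧ V ⊆ O ∧ (V ∩ A).Nonempty ∧
        ∃ c : ℤ, ∀ a, a ∈ V → ∀ (haO : a ∈ O) (haA : a ∈ A),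
          g ⟨a, hmemW haO haA, haA⟩ = c := by
      intro w hw
      have hw_cl : w ∈ closure A := hWcl hw
      have hw_O : w ∈ O := hOofW hw
      rcases hbasis w hw_cl O (hO.mem_nhds hw_O) with ⟨V, hVo, hwV, hVO, hne, hconn⟩
      refine ⟨V, hVo, hwV, hVO, hne, ?_⟩
      -- g is constant on V ∩ A since V ∩ A is connected and ℤ is discrete
      have hsub : V ∩ A ⊆ W ∩ A := fun a ⟨haV, haA⟩ => ⟨hmemW (hVO haV) haA, haA⟩
      haveI : ConnectedSpace ↥(V ∩ A) := isConnected_iff_connectedSpace.mp hconn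
      obtain ⟨a₀, ha₀⟩ := hne
      refine ⟨g ⟨a₀, hsub ha₀⟩, ?_⟩
      intro a haV haO haA
      have hgc : (fun x : ↥(V ∩ A) => g (Set.inclusion hsub x)) ⟨a, haV, haA⟩ =
          (fun x : ↥(V ∩ A) => g (Set.inclusion hsub x)) ⟨a₀, ha₀⟩ :=
        PreconnectedSpace.constant ‹ConnectedSpace ↥(V ∩ A)›.toPreconnectedSpace
          (g.continuous.comp (continuous_inclusion hsub))
      simpa [Set.inclusion] using hgc
    choose V hVo hwV hVO hne c hc using key
    -- well-definedness: overlapping choices give the same constant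
    have hcomp : ∀ (w : X) (hw : w ∈ W) (w' : X) (hw' : w' ∈ W),
        w' ∈ V w hw → c w hw = c w' hw' := by
      intro w hw w' hw' hw'V
      have hw'_cl : w' ∈ closure A := hWcl hw'
      have hnhds : V w hw ∩ V w' hw' ∈ nhds w' :=
        ((hVo w hw).inter (hVo w' hw')).mem_nhds ⟨hw'V, hwV w' hw'⟩
      rcases hbasis w' hw'_cl _ hnhds with ⟨V₃, _, _, hV₃sub, ⟨a, haV₃, haA⟩, _⟩
      have ha1 : a ∈ V w hw := (hV₃sub haV₃).1
      have ha2 : a ∈ V w' hw' := (hV₃sub haV₃).2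
      have haO : a ∈ O := hVO w hw ha1
      rw [← hc w hw a ha1 haO haA, ← hc w' hw' a ha2 haO haA]
    -- define the extension
    let F : ↥W → ℤ := fun x => c x x.2
    have hF : IsLocallyConstant F := by
      rw [IsLocallyConstant.iff_exists_open]
      intro x
      refine ⟨Subtype.val ⁻¹' V x x.2, (hVo x x.2).preimage continuous_subtype_val,
        hwV x x.2, ?_⟩
      intro y hy
      exact (hcomp x x.2 y y.2 hy).symm
    refine ⟨⟨F, hF.continuous⟩, ?_⟩
    apply ContinuousMap.ext
    rintro ⟨a, haW, haA⟩
    have haO : a ∈ O := hOofW haW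
    exact (hc a haW a (hwV a haW) haO haA).symm
end
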